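/- arXiv:2404.10201 — 2 statements merged into one kernel-verified Lean document; each statement's English description precedes it below -/
import Mathlib

section
/- Let V₁, …, Vₙ be independent square-integrable random vectors in ℝ^d with E[V_i] = 0 for each i, and let A be a square-integrable random vector in ℝ^d on the same probability space with E[A] = 0. Then E[‖A − Σ_{i=1}^n V_i‖₂²] ≥ Σ_{i=1}^n E[‖E[A | σ(V_i)] − V_i‖₂²]. -/
open MeasureTheory ProbabilityTheory RealInnerProductSpace

private lemma integrable_inner_of_memLp {Ω : Type*} [m : MeasurableSpace Ω] {P : Measure Ω}
    {d : ℕ} {f g : Ω → EuclideanSpace ℝ (Fin d)}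
    (hf : MemLp f 2 P) (hg : MemLp g 2 P) :
    Integrable (fun ω => ⟪f ω, g ω⟫) P := by
  refine (L2.integrable_inner (𝕜 := ℝ) (hf.toLp f) (hg.toLp g)).congr ?_
  filter_upwards [hf.coeFn_toLp, hg.coeFn_toLp] with ω h1 h2
  rw [h1, h2]

private lemma condExp_ae_eq_condExpL2' {Ω : Type*} {m' : MeasurableSpace Ω}
    [m : MeasurableSpace Ω] {P : Measure Ω} [IsProbabilityMeasure P] {d : ℕ} (hm : m' ≤ m)
    {f : Ω → EuclideanSpace ℝ (Fin d)} (hf : MemLp f 2 P) :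
    P[f|m'] =ᵐ[P]
      (condExpL2 (EuclideanSpace ℝ (Fin d)) ℝ hm (hf.toLp f) : Lp (EuclideanSpace ℝ (Fin d)) 2 P) := by
  refine (ae_eq_condExp_of_forall_setIntegral_eq hm (hf.integrable one_le_two)
    (fun s _ _ => (integrableOn_condExpL2_of_measure_ne_top hm (measure_ne_top P s) _))
    (fun s hs hμs => ?_) (aestronglyMeasurable_condExpL2 hm _)).symm
  rw [integral_condExpL2_eq hm (hf.toLp f) hs hμs.ne]
  exact setIntegral_congr_ae (hm s hs) (hf.coeFn_toLp.mono fun x hx _ => hx)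

private lemma memLp_two_condexp {Ω : Type*} {m' : MeasurableSpace Ω}
    [m : MeasurableSpace Ω] {P : Measure Ω} [IsProbabilityMeasure P] {d : ℕ} (hm : m' ≤ m)
    {f : Ω → EuclideanSpace ℝ (Fin d)} (hf : MemLp f 2 P) :
    MemLp (P[f|m']) 2 P :=
  (Lp.memLp _).ae_eq (condExp_ae_eq_condExpL2' hm hf).symm

private lemma integral_inner_condexp' {Ω : Type*} {m' : MeasurableSpace Ω}
    [m : MeasurableSpace Ω] {P : Measure Ω} [IsProbabilityMeasure P] {d : ℕ} (hm : m' ≤ m)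
    {f g : Ω → EuclideanSpace ℝ (Fin d)} (hf : MemLp f 2 P) (hg : MemLp g 2 P)
    (hgm : AEStronglyMeasurable[m'] g P) :
    ∫ ω, ⟪g ω, f ω⟫ ∂P = ∫ ω, ⟪g ω, (P[f|m']) ω⟫ ∂P := by
  have h1 : (inner (𝕜 := ℝ)
        ((condExpL2 (EuclideanSpace ℝ (Fin d)) ℝ hm (hf.toLp f) : Lp (EuclideanSpace ℝ (Fin d)) 2 P))
        (hg.toLp g))
      = inner (𝕜 := ℝ) (hf.toLp f) (hg.toLp g) :=
    inner_condExpL2_eq_inner_fun hm _ _ (hgm.congr hg.coeFn_toLp.symm)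
  have h2 := condExp_ae_eq_condExpL2' hm hf
  calc ∫ ω, ⟪g ω, f ω⟫ ∂P
      = ∫ ω, ⟪(hf.toLp f : Ω → EuclideanSpace ℝ (Fin d)) ω, (hg.toLp g : Ω → EuclideanSpace ℝ (Fin d)) ω⟫ ∂P := by
        refine integral_congr_ae ?_
        filter_upwards [hf.coeFn_toLp, hg.coeFn_toLp] with ω e1 e2
        rw [e1, e2, real_inner_comm]
    _ = inner (𝕜 := ℝ) (hf.toLp f) (hg.toLp g) := (L2.inner_def _ _).symm
    _ = inner (𝕜 := ℝ)
        ((condExpL2 (EuclideanSpace ℝ (Fin d)) ℝ hm (hf.toLp f) : Lp (EuclideanSpace ℝ (Fin d)) 2 P))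
        (hg.toLp g) := h1.symm
    _ = ∫ ω, ⟪((condExpL2 (EuclideanSpace ℝ (Fin d)) ℝ hm (hf.toLp f) : Lp (EuclideanSpace ℝ (Fin d)) 2 P) : Ω → EuclideanSpace ℝ (Fin d)) ω, (hg.toLp g : Ω → EuclideanSpace ℝ (Fin d)) ω⟫ ∂P := L2.inner_def _ _
    _ = ∫ ω, ⟪g ω, (P[f|m']) ω⟫ ∂P := by
        refine integral_congr_ae ?_
        filter_upwards [hg.coeFn_toLp, h2] with ω e1 e2
        rw [e1, e2, real_inner_comm]

private lemma integral_inner_eq_zero_of_indep {Ω : Type*} [m : MeasurableSpace Ω]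
    {P : Measure Ω} [IsProbabilityMeasure P] {d : ℕ} {X Y : Ω → EuclideanSpace ℝ (Fin d)}
    (h : IndepFun X Y P) (hX : MemLp X 2 P) (hY : MemLp Y 2 P)
    (hX0 : ∫ ω, X ω ∂P = 0) :
    ∫ ω, ⟪X ω, Y ω⟫ ∂P = 0 := by
  have hXi : Integrable X P := hX.integrable one_le_two
  have hYi : Integrable Y P := hY.integrable one_le_two
  have hmeas : ∀ k : Fin d, Measurable fun x : EuclideanSpace ℝ (Fin d) => x k :=
    fun k => (EuclideanSpace.proj (𝕜 := ℝ) k).continuous.measurable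
  have hcoordX : ∀ k : Fin d, Integrable (fun ω => X ω k) P := fun k =>
    (EuclideanSpace.proj (𝕜 := ℝ) k).integrable_comp hXi
  have hcoordY : ∀ k : Fin d, Integrable (fun ω => Y ω k) P := fun k =>
    (EuclideanSpace.proj (𝕜 := ℝ) k).integrable_comp hYi
  have hX0k : ∀ k : Fin d, ∫ ω, X ω k ∂P = 0 := fun k => by
    have := (EuclideanSpace.proj (𝕜 := ℝ) k).integral_comp_comm hXi
    simpa [hX0] using this
  have expand : ∀ ω, ⟪X ω, Y ω⟫ = ∑ k : Fin d, X ω k * Y ω k := fun ω => by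
    simp [PiLp.inner_apply, RCLike.inner_apply, conj_trivial, mul_comm]
  simp_rw [expand]
  rw [integral_finset_sum]
  · refine Finset.sum_eq_zero fun k _ => ?_
    have hk : IndepFun (fun ω => X ω k) (fun ω => Y ω k) P := h.comp (hmeas k) (hmeas k)
    have := hk.integral_mul_eq_mul_integral (hcoordX k).aestronglyMeasurable (hcoordY k).aestronglyMeasurable
    rw [show (∫ a, X a k * Y a k ∂P) = integral P ((fun ω => X ω k) * fun ω => Y ω k) from rfl,
      this, hX0k k, zero_mul]
  · exact fun k _ => ((IndepFun.integrable_mul (h.comp (hmeas k) (hmeas k)) (hcoordX k) (hcoordY k)))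

/-- Core inequality of the reconstruction attack against unbiased protocols
(Proposition 2.4): if `V 1, …, V n` are independent square-integrable mean-zero random
vectors in `ℝ^d` and `A` is a square-integrable mean-zero random vector on the same
space, then `E[‖A − ∑ᵢ Vᵢ‖²] ≥ ∑ᵢ E[‖E[A | σ(Vᵢ)] − Vᵢ‖²]`. -/
theorem reconstruction_attack_lower_bound
    {Ω : Type*} [m : MeasurableSpace Ω] (P : Measure Ω) [IsProbabilityMeasure P]
    (d n : ℕ) (V : Fin n → Ω → EuclideanSpace ℝ (Fin d))
    (hV_meas : ∀ i, Measurable (V i))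
    (hV_indep : iIndepFun V P)
    (hV_L2 : ∀ i, MemLp (V i) 2 P)
    (hV_mean : ∀ i, ∫ ω, V i ω ∂P = 0)
    (A : Ω → EuclideanSpace ℝ (Fin d)) (hA_L2 : MemLp A 2 P)
    (hA_mean : ∫ ω, A ω ∂P = 0) :
    ∑ i : Fin n,
        ∫ ω, ‖(P[A | MeasurableSpace.comap (V i) inferInstance]) ω - V i ω‖ ^ 2 ∂P
      ≤ ∫ ω, ‖A ω - ∑ i : Fin n, V i ω‖ ^ 2 ∂P := by
  classical
  have hm_le : ∀ i, MeasurableSpace.comap (V i) inferInstance ≤ m :=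
    fun i => (hV_meas i).comap_le
  set B : Fin n → Ω → EuclideanSpace ℝ (Fin d) :=
    fun i => P[A | MeasurableSpace.comap (V i) inferInstance] with hBdef
  set W : Fin n → Ω → EuclideanSpace ℝ (Fin d) := fun i ω => B i ω - V i ω with hWdef
  set X : Ω → EuclideanSpace ℝ (Fin d) := fun ω => A ω - ∑ i, V i ω with hXdef
  set T : Ω → EuclideanSpace ℝ (Fin d) := fun ω => ∑ i, W i ω with hTdef
  -- L² facts
  have hB_L2 : ∀ i, MemLp (B i) 2 P := by
    intro i; rw [hBdef]; exact memLp_two_condexp (hm_le i) hA_L2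
  have hW_L2 : ∀ i, MemLp (W i) 2 P := by
    intro i; rw [hWdef]; exact (hB_L2 i).sub (hV_L2 i)
  have hX_L2 : MemLp X 2 P := by
    rw [hXdef]; exact hA_L2.sub (memLp_finset_sum _ fun i _ => hV_L2 i)
  have hT_L2 : MemLp T 2 P := by
    rw [hTdef]; exact memLp_finset_sum _ fun i _ => hW_L2 i
  -- measurability of `W i` w.r.t. `σ(V i)`
  have hW_sm : ∀ i, StronglyMeasurable[MeasurableSpace.comap (V i) inferInstance] (W i) := by
    intro i
    rw [hWdef, hBdef]
    exact stronglyMeasurable_condExp.sub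
      (Measurable.stronglyMeasurable (Measurable.of_comap_le le_rfl))
  -- means
  have hB_mean : ∀ i, ∫ ω, B i ω ∂P = 0 := by
    intro i; rw [hBdef]; exact (integral_condExp (hm_le i)).trans hA_mean
  have hW_mean : ∀ i, ∫ ω, W i ω ∂P = 0 := by
    intro i
    simp only [hWdef]
    rw [integral_sub ((hB_L2 i).integrable one_le_two) ((hV_L2 i).integrable one_le_two),
      hB_mean i, hV_mean i, sub_zero]
  -- independence
  have hIndep : ∀ i j, i ≠ j → Indep (MeasurableSpace.comap (V i) inferInstance)
      (MeasurableSpace.comap (V j) inferInstance) P :=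
    fun i j hij => ((iIndepFun_iff_iIndep _ _ _).mp hV_indep).indep hij
  have hW_comap_le : ∀ i, MeasurableSpace.comap (W i) inferInstance ≤
      MeasurableSpace.comap (V i) inferInstance :=
    fun i => Measurable.comap_le (hW_sm i).measurable
  have hIndepVW : ∀ i j, i ≠ j → IndepFun (V j) (W i) P := fun i j hij =>
    (IndepFun_iff_Indep _ _ _).mpr
      (indep_of_indep_of_le_right (hIndep j i hij.symm) (hW_comap_le i))
  have hIndepWW : ∀ i j, i ≠ j → IndepFun (W i) (W j) P := fun i j hij =>
    (IndepFun_iff_Indep _ _ _).mpr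
      (indep_of_indep_of_le_right
        (indep_of_indep_of_le_left (hIndep i j hij) (hW_comap_le i)) (hW_comap_le j))
  -- integrability of squared norms
  have hnormsq_int : ∀ {f : Ω → EuclideanSpace ℝ (Fin d)}, MemLp f 2 P →
      Integrable (fun ω => ‖f ω‖ ^ 2) P := by
    intro f hf
    refine (integrable_inner_of_memLp hf hf).congr (Filter.Eventually.of_forall fun ω => ?_)
    simp only [real_inner_self_eq_norm_sq]
  -- Step A : ∫ ⟪W i, X⟫ = ∫ ‖W i‖²
  have hstepA : ∀ i, ∫ ω, ⟪W i ω, X ω⟫ ∂P = ∫ ω, ‖W i ω‖ ^ 2 ∂P := by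
    intro i
    have h1 : ∫ ω, ⟪W i ω, A ω⟫ ∂P = ∫ ω, ⟪W i ω, B i ω⟫ ∂P := by
      simp only [hBdef]
      exact integral_inner_condexp' (hm_le i) hA_L2 (hW_L2 i)
        ((hW_sm i).aestronglyMeasurable)
    have h2 : ∀ j, j ≠ i → ∫ ω, ⟪W i ω, V j ω⟫ ∂P = 0 := by
      intro j hji
      have h0 := integral_inner_eq_zero_of_indep (hIndepVW i j hji.symm)
        (hV_L2 j) (hW_L2 i) (hV_mean j)
      have hc : ∀ ω, ⟪W i ω, V j ω⟫ = ⟪V j ω, W i ω⟫ := fun ω => real_inner_comm _ _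
      simp_rw [hc]
      exact h0
    have hsum : ∫ ω, ⟪W i ω, X ω⟫ ∂P
        = ∫ ω, ⟪W i ω, A ω⟫ ∂P - ∑ j, ∫ ω, ⟪W i ω, V j ω⟫ ∂P := by
      have hpt : ∀ ω, ⟪W i ω, X ω⟫ = ⟪W i ω, A ω⟫ - ∑ j, ⟪W i ω, V j ω⟫ := by
        intro ω
        simp only [hXdef, inner_sub_right, inner_sum]
      simp_rw [hpt]
      rw [integral_sub (integrable_inner_of_memLp (hW_L2 i) hA_L2)
          (integrable_finset_sum _ fun j _ => integrable_inner_of_memLp (hW_L2 i) (hV_L2 j)),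
        integral_finset_sum _ fun j _ => integrable_inner_of_memLp (hW_L2 i) (hV_L2 j)]
    have hsum2 : ∑ j, ∫ ω, ⟪W i ω, V j ω⟫ ∂P = ∫ ω, ⟪W i ω, V i ω⟫ ∂P :=
      Finset.sum_eq_single_of_mem i (Finset.mem_univ i) fun j _ hji => h2 j hji
    rw [hsum, hsum2, h1, ← integral_sub (integrable_inner_of_memLp (hW_L2 i) (hB_L2 i))
      (integrable_inner_of_memLp (hW_L2 i) (hV_L2 i))]
    refine integral_congr_ae (Filter.Eventually.of_forall fun ω => ?_)
    show ⟪W i ω, B i ω⟫ - ⟪W i ω, V i ω⟫ = ‖W i ω‖ ^ 2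
    rw [← inner_sub_right, show B i ω - V i ω = W i ω from rfl, real_inner_self_eq_norm_sq]
  -- Step B : ∫ ‖T‖² = ∑ ∫ ‖W i‖²
  have hstepB : ∫ ω, ‖T ω‖ ^ 2 ∂P = ∑ i, ∫ ω, ‖W i ω‖ ^ 2 ∂P := by
    have hpt : ∀ ω, ‖T ω‖ ^ 2 = ∑ i, ∑ j, ⟪W i ω, W j ω⟫ := by
      intro ω
      simp only [hTdef]
      rw [← real_inner_self_eq_norm_sq, sum_inner]
      exact Finset.sum_congr rfl fun i _ => inner_sum _ _ _
    simp_rw [hpt]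
    rw [integral_finset_sum _ fun i _ => integrable_finset_sum _
      fun j _ => integrable_inner_of_memLp (hW_L2 i) (hW_L2 j)]
    refine Finset.sum_congr rfl fun i _ => ?_
    rw [integral_finset_sum _ fun j _ => integrable_inner_of_memLp (hW_L2 i) (hW_L2 j),
      Finset.sum_eq_single_of_mem i (Finset.mem_univ i) fun j _ hji =>
        integral_inner_eq_zero_of_indep (hIndepWW i j hji.symm) (hW_L2 i) (hW_L2 j) (hW_mean i)]
    refine integral_congr_ae (Filter.Eventually.of_forall fun ω => ?_)
    show ⟪W i ω, W i ω⟫ = ‖W i ω‖ ^ 2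
    exact real_inner_self_eq_norm_sq _
  -- Step C : expansion and positivity
  have hXT : ∫ ω, ⟪X ω, T ω⟫ ∂P = ∑ i, ∫ ω, ‖W i ω‖ ^ 2 ∂P := by
    have hpt2 : ∀ ω, ⟪X ω, T ω⟫ = ∑ i, ⟪W i ω, X ω⟫ := by
      intro ω
      simp only [hTdef]
      rw [inner_sum]
      exact Finset.sum_congr rfl fun i _ => real_inner_comm _ _
    simp_rw [hpt2]
    rw [integral_finset_sum _ fun i _ => integrable_inner_of_memLp (hW_L2 i) hX_L2]
    exact Finset.sum_congr rfl fun i _ => hstepA i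
  have hpos : (0:ℝ) ≤ ∫ ω, ‖X ω - T ω‖ ^ 2 ∂P :=
    integral_nonneg fun ω => by positivity
  have hexp : ∫ ω, ‖X ω - T ω‖ ^ 2 ∂P
      = ∫ ω, ‖X ω‖ ^ 2 ∂P - 2 * ∑ i, ∫ ω, ‖W i ω‖ ^ 2 ∂P
        + ∑ i, ∫ ω, ‖W i ω‖ ^ 2 ∂P := by
    have hpt : ∀ ω, ‖X ω - T ω‖ ^ 2
        = ‖X ω‖ ^ 2 - 2 * ⟪X ω, T ω⟫ + ‖T ω‖ ^ 2 := fun ω => norm_sub_sq_real _ _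
    simp_rw [hpt]
    have hint2 : Integrable (fun ω => 2 * ⟪X ω, T ω⟫) P :=
      (integrable_inner_of_memLp hX_L2 hT_L2).const_mul 2
    have hint1 : Integrable (fun ω => ‖X ω‖ ^ 2 - 2 * ⟪X ω, T ω⟫) P :=
      (hnormsq_int hX_L2).sub hint2
    rw [integral_add hint1 (hnormsq_int hT_L2),
      integral_sub (hnormsq_int hX_L2) hint2,
      integral_const_mul, hXT, hstepB]
  have hfinal : ∑ i, ∫ ω, ‖W i ω‖ ^ 2 ∂P ≤ ∫ ω, ‖X ω‖ ^ 2 ∂P := by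
    rw [hexp] at hpos
    linarith
  simp only [hWdef, hBdef, hXdef] at hfinal
  exact hfinal
end

section
/- Fix integers d ≥ 1 and r ≥ 32. Let I = { m/r − 1/(2r) : m ∈ {1, …, r} } and J = I^d ⊆ [0,1]^d. Then for every b ∈ J, (1/r^d) · Σ_{a ∈ J, a ≠ b} ( max( ‖a − b‖₂ − √d/(2r), 0 ) )² ≥ d/2048. -/
open Finset

private lemma sum_range_cast (n : ℕ) :
    ∑ i ∈ Finset.range n, (i : ℝ) = (n : ℝ) * ((n : ℝ) - 1) / 2 := by
  induction n with
  | zero => simp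
  | succ k ih => rw [Finset.sum_range_succ, ih]; push_cast; ring

private lemma sum_range_sq_cast (n : ℕ) :
    ∑ i ∈ Finset.range n, (i : ℝ) ^ 2 =
      (n : ℝ) * ((n : ℝ) - 1) * (2 * (n : ℝ) - 1) / 6 := by
  induction n with
  | zero => simp
  | succ k ih => rw [Finset.sum_range_succ, ih]; push_cast; ring

private lemma coord_bound (r : ℕ) (hr : 32 ≤ r) (k : Fin r) :
    (r : ℝ) ^ 3 / 13 ≤ ∑ m : Fin r, ((m : ℝ) - (k : ℝ)) ^ 2 := by
  have h := Fin.sum_univ_eq_sum_range (fun i : ℕ => ((i : ℝ) - (k : ℝ)) ^ 2) r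
  rw [h]
  have expand : ∑ i ∈ Finset.range r, ((i : ℝ) - (k : ℝ)) ^ 2 =
      (∑ i ∈ Finset.range r, (i : ℝ) ^ 2) -
        2 * (k : ℝ) * (∑ i ∈ Finset.range r, (i : ℝ)) + r * (k : ℝ) ^ 2 := by
    rw [Finset.mul_sum, ← Finset.sum_sub_distrib]
    rw [show ((r : ℝ) * (k:ℝ)^2) = ∑ _i ∈ Finset.range r, (k:ℝ)^2 by
      rw [Finset.sum_const, Finset.card_range, nsmul_eq_mul]]
    rw [← Finset.sum_add_distrib]
    exact Finset.sum_congr rfl fun i _ => by ring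
  rw [expand, sum_range_cast, sum_range_sq_cast]
  have hr' : (32 : ℝ) ≤ (r : ℝ) := by exact_mod_cast hr
  nlinarith [mul_nonneg (by positivity : (0:ℝ) ≤ (r:ℝ))
      (sq_nonneg ((k : ℝ) - ((r : ℝ) - 1) / 2)), sq_nonneg ((r:ℝ))]

private lemma sum_eval (d r : ℕ) (j : Fin d) (g : Fin r → ℝ) :
    ∑ a : Fin d → Fin r, g (a j) = (r : ℝ) ^ (d - 1) * ∑ m : Fin r, g m := by
  rw [Fintype.sum_equiv (Equiv.funSplitAt j (Fin r)) (fun a => g (a j))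
    (fun p => g p.1) (fun a => rfl)]
  rw [Fintype.sum_prod_type]
  have hcard : Fintype.card ({ i : Fin d // i ≠ j } → Fin r) = r ^ (d - 1) := by
    rw [Fintype.card_fun, Fintype.card_fin]
    congr 1
    have : Fintype.card { i : Fin d // i ≠ j } = d - 1 := by
      simp [Fintype.card_subtype_compl, Fintype.card_subtype_eq]
    exact this
  calc ∑ m : Fin r, ∑ _q : ({ i : Fin d // i ≠ j } → Fin r), g m
      = ∑ m : Fin r, (r : ℝ) ^ (d - 1) * g m := by
        refine Finset.sum_congr rfl fun m _ => ?_
        rw [Finset.sum_const, nsmul_eq_mul, Finset.card_univ, hcard]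
        push_cast
        ring
    _ = (r : ℝ) ^ (d - 1) * ∑ m : Fin r, g m := by rw [Finset.mul_sum]

/-- The grid point of `J = I^d` indexed by `a : Fin d → Fin r`, where
`I = { m/r − 1/(2r) : m ∈ {1, …, r} }` is the set of centers of the partition of `[0,1]`
into `r` intervals of length `1/r`. -/
noncomputable def gridPoint (d r : ℕ) (a : Fin d → Fin r) : EuclideanSpace ℝ (Fin d) :=
  WithLp.toLp 2 (fun j => ((a j : ℝ) + 1) / r - 1 / (2 * r))

/-- Lemma C.3: for `r ≥ 32` and any center `b` of the partition of `[0,1]^d` into `r^d`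
subcubes of side `1/r`, the average over the grid `J` of
`(max(‖a − b‖₂ − √d/(2r), 0))²` over `a ≠ b` is at least `d/2048`. -/
theorem grid_average_distance_lower_bound (d r : ℕ) (hd : 1 ≤ d) (hr : 32 ≤ r)
    (b : Fin d → Fin r) :
    (d : ℝ) / 2048 ≤
      (1 / (r : ℝ) ^ d) *
        ∑ a ∈ Finset.univ.filter (fun a : Fin d → Fin r => a ≠ b),
          (max (‖gridPoint d r a - gridPoint d r b‖ - Real.sqrt d / (2 * r)) 0) ^ 2 := by
  have hr' : (32 : ℝ) ≤ (r : ℝ) := by exact_mod_cast hr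
  have hrpos : (0 : ℝ) < (r : ℝ) := by linarith
  have hd' : (1 : ℝ) ≤ (d : ℝ) := by exact_mod_cast hd
  set c : ℝ := Real.sqrt d / (2 * r) with hc
  set x : (Fin d → Fin r) → ℝ := fun a => ‖gridPoint d r a - gridPoint d r b‖ with hx
  -- norm squared formula
  have hsq : ∀ a, (x a) ^ 2 = ∑ j, (((a j : ℝ) - (b j : ℝ)) / r) ^ 2 := by
    intro a
    have h1 : x a = Real.sqrt (∑ j, (((a j : ℝ) - (b j : ℝ)) / r) ^ 2) := by
      rw [hx]
      simp only [EuclideanSpace.norm_eq]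
      congr 1
      refine Finset.sum_congr rfl fun j _ => ?_
      have : (gridPoint d r a - gridPoint d r b) j = gridPoint d r a j - gridPoint d r b j :=
        rfl
      rw [this, Real.norm_eq_abs, sq_abs]
      simp only [gridPoint, WithLp.ofLp_toLp]
      congr 1
      ring
    rw [h1, Real.sq_sqrt (Finset.sum_nonneg fun j _ => sq_nonneg _)]
  have hxnonneg : ∀ a, 0 ≤ x a := fun a => norm_nonneg _
  have hxle : ∀ a, x a ≤ Real.sqrt d := by
    intro a
    rw [Real.le_sqrt (hxnonneg a) (by positivity)]
    rw [hsq]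
    calc ∑ j, (((a j : ℝ) - (b j : ℝ)) / r) ^ 2 ≤ ∑ _j : Fin d, (1 : ℝ) := by
          refine Finset.sum_le_sum fun j _ => ?_
          rw [div_pow, div_le_one (by positivity)]
          have h1 : ((a j : ℝ)) < r := by exact_mod_cast (a j).isLt
          have h2 : ((b j : ℝ)) < r := by exact_mod_cast (b j).isLt
          have h3 : (0:ℝ) ≤ (a j : ℝ) := by positivity
          have h4 : (0:ℝ) ≤ (b j : ℝ) := by positivity
          nlinarith
      _ = (d : ℝ) := by simp
  have hcnonneg : 0 ≤ c := by positivity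
  have hsd : Real.sqrt d * Real.sqrt d = (d : ℝ) := Real.mul_self_sqrt (by positivity)
  have hcd : 2 * c * Real.sqrt d = (d : ℝ) / r := by
    rw [hc]; field_simp; nlinarith
  -- pointwise lower bound
  have key : ∀ a, (x a) ^ 2 - (d : ℝ) / r ≤ (max (x a - c) 0) ^ 2 := by
    intro a
    rcases le_or_gt c (x a) with h | h
    · rw [max_eq_left (by linarith)]
      have := hxle a
      nlinarith [hcd]
    · rw [max_eq_right (by linarith)]
      have := hxle a
      nlinarith [hcd, hxnonneg a, hcnonneg]
  -- sum over the filter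
  have hfil : (Finset.univ.filter (fun a : Fin d → Fin r => a ≠ b)) =
      Finset.univ.erase b := Finset.filter_ne' _ _
  have hxb : x b = 0 := by rw [hx]; simp
  have hcards : (Fintype.card (Fin d → Fin r) : ℝ) = (r : ℝ) ^ d := by
    rw [Fintype.card_fun, Fintype.card_fin, Fintype.card_fin]; push_cast; ring
  -- total sum of squares lower bound
  have htot : (d : ℝ) * (r : ℝ) ^ d / 13 ≤ ∑ a : Fin d → Fin r, (x a) ^ 2 := by
    have h1 : ∑ a : Fin d → Fin r, (x a) ^ 2 =
        ∑ j : Fin d, ∑ a : Fin d → Fin r, (((a j : ℝ) - (b j : ℝ)) / r) ^ 2 := by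
      rw [← Finset.sum_comm]
      exact Finset.sum_congr rfl fun a _ => hsq a
    rw [h1]
    have h2 : ∀ j : Fin d, (r : ℝ) ^ d / 13 ≤
        ∑ a : Fin d → Fin r, (((a j : ℝ) - (b j : ℝ)) / r) ^ 2 := by
      intro j
      rw [sum_eval d r j (fun m : Fin r => (((m : ℝ) - (b j : ℝ)) / r) ^ 2)]
      have h3 : ∑ m : Fin r, (((m : ℝ) - (b j : ℝ)) / r) ^ 2 =
          (∑ m : Fin r, ((m : ℝ) - (b j : ℝ)) ^ 2) / (r : ℝ) ^ 2 := by
        rw [Finset.sum_div]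
        exact Finset.sum_congr rfl fun m _ => by rw [div_pow]
      rw [h3]
      have h4 := coord_bound r hr (b j)
      have h5 : (r : ℝ) / 13 ≤ (∑ m : Fin r, ((m : ℝ) - (b j : ℝ)) ^ 2) / (r : ℝ) ^ 2 := by
        rw [le_div_iff₀ (by positivity)]
        calc (r : ℝ) / 13 * (r : ℝ) ^ 2 = (r : ℝ) ^ 3 / 13 := by ring
          _ ≤ _ := h4
      have hpow : (r : ℝ) ^ (d - 1) * (r : ℝ) = (r : ℝ) ^ d := by
        rw [← pow_succ]
        congr 1
        omega
      calc (r : ℝ) ^ d / 13 = (r : ℝ) ^ (d - 1) * ((r : ℝ) / 13) := by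
            rw [← hpow]; ring
        _ ≤ (r : ℝ) ^ (d - 1) * ((∑ m : Fin r, ((m : ℝ) - (b j : ℝ)) ^ 2) / (r : ℝ) ^ 2) :=
            mul_le_mul_of_nonneg_left h5 (by positivity)
    calc (d : ℝ) * (r : ℝ) ^ d / 13 = ∑ _j : Fin d, (r : ℝ) ^ d / 13 := by
          rw [Finset.sum_const, Finset.card_univ, Fintype.card_fin, nsmul_eq_mul]; ring
      _ ≤ _ := Finset.sum_le_sum fun j _ => h2 j
  -- lower bound the filtered sum
  have hS : (d : ℝ) * (r : ℝ) ^ d / 13 - (r : ℝ) ^ d * ((d : ℝ) / r) ≤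
      ∑ a ∈ Finset.univ.filter (fun a : Fin d → Fin r => a ≠ b),
        (max (x a - c) 0) ^ 2 := by
    have h1 : ∑ a ∈ Finset.univ.filter (fun a : Fin d → Fin r => a ≠ b),
        ((x a) ^ 2 - (d : ℝ) / r) ≤
        ∑ a ∈ Finset.univ.filter (fun a : Fin d → Fin r => a ≠ b),
          (max (x a - c) 0) ^ 2 :=
      Finset.sum_le_sum fun a _ => key a
    refine le_trans ?_ h1
    rw [hfil, Finset.sum_erase_eq_sub (Finset.mem_univ b)]
    rw [Finset.sum_sub_distrib, Finset.sum_const, Finset.card_univ, nsmul_eq_mul, hxb]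
    rw [hcards]
    have hdrnn : (0:ℝ) ≤ (d : ℝ) / r := by positivity
    nlinarith [htot]
  -- conclude
  rw [one_div, inv_mul_eq_div, le_div_iff₀ (by positivity : (0:ℝ) < (r:ℝ)^d)]
  refine le_trans ?_ hS
  have hRpos : (0:ℝ) < (r : ℝ) ^ d := by positivity
  have hdr : (d : ℝ) / r ≤ (d : ℝ) / 32 := by
    apply div_le_div_of_nonneg_left (by linarith) (by norm_num) hr'
  nlinarith [mul_le_mul_of_nonneg_left hdr hRpos.le, mul_pos (by linarith : (0:ℝ) < (d:ℝ)) hRpos]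
end
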